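/- Let ρ₂ be a nonnegative measurable function on (0,∞) with ∫₀^∞ K₀(v) ρ₂(v) dv < ∞. Then for every x>0 the convolution of the constant function 1 with ρ₂ is well-defined and satisfies |(1⋆ρ₂)(x)| ≤ (1/4)∫₀^∞∫₀^∞ |φ(x,u,v)| ρ₂(v) du dv ≤ 2·∫₀^∞ K₀(v) ρ₂(v) dv. -/

import Mathlib

open MeasureTheory Real Set

/-- The kernel function φ(x,u,v). -/
noncomputable def phiKer (x u v : ℝ) : ℝ :=
  Real.exp (-v * Real.cosh (x + u - 1)) + Real.exp (-v * Real.cosh (x - u + 1))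
    - Real.exp (-v * Real.cosh (x + u + 1)) - Real.exp (-v * Real.cosh (x - u - 1))

/-- The modified Bessel function of the second kind of order zero. -/
noncomputable def K0 (v : ℝ) : ℝ := ∫ t in Set.Ioi (0 : ℝ), Real.exp (-v * Real.cosh t)

/-- The trigonometric-weighted generalized convolution (f ⋆ g). -/
noncomputable def gconv (f g : ℝ → ℝ) (x : ℝ) : ℝ :=
  (1 / 4) * ∫ v in Set.Ioi (0 : ℝ), ∫ u in Set.Ioi (0 : ℝ), phiKer x u v * f u * g v

/-- Fourier cosine transform. -/
noncomputable def Fc (f : ℝ → ℝ) (y : ℝ) : ℝ :=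
  Real.sqrt (2 / Real.pi) * ∫ x in Set.Ioi (0 : ℝ), f x * Real.cos (x * y)

/-- Fourier sine transform. -/
noncomputable def Fs (f : ℝ → ℝ) (y : ℝ) : ℝ :=
  Real.sqrt (2 / Real.pi) * ∫ x in Set.Ioi (0 : ℝ), f x * Real.sin (x * y)

/-- Modified Bessel function K_{iy}(x). -/
noncomputable def Kiy (y x : ℝ) : ℝ :=
  ∫ u in Set.Ioi (0 : ℝ), Real.exp (-x * Real.cosh u) * Real.cos (y * u)

/-- Kontorovich–Lebedev transform. -/
noncomputable def KL (g : ℝ → ℝ) (y : ℝ) : ℝ := ∫ x in Set.Ioi (0 : ℝ), Kiy y x * g x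

/-- Fourier cosine convolution. -/
noncomputable def fcConv (f g : ℝ → ℝ) (x : ℝ) : ℝ :=
  (1 / Real.sqrt (2 * Real.pi)) * ∫ u in Set.Ioi (0 : ℝ), f u * (g |x - u| + g (x + u))

/-- Fourier sine–cosine generalized convolution. -/
noncomputable def fscConv (f g : ℝ → ℝ) (x : ℝ) : ℝ :=
  (1 / Real.sqrt (2 * Real.pi)) * ∫ u in Set.Ioi (0 : ℝ), f u * (g |x - u| - g (x + u))

/-!
As a function of `u`, each of the four exponentials in `φ(x, u, v)` is a translate or a
reflection of `t ↦ exp (-v cosh t)`, whose integral over `ℝ` is `2 K₀(v)` by evenness. Hence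
`∫₀^∞ |φ(x, u, v)| du ≤ 8 K₀(v)`, and Tonelli with the integrable majorant `8 K₀ ρ₂` gives the
integrability of `φ ρ₂` on the quadrant together with both estimates.
-/

noncomputable def expNegMulCosh (v t : ℝ) : ℝ := exp (-v * cosh t)

lemma expNegMulCosh_nonneg (v t : ℝ) : 0 ≤ expNegMulCosh v t := (exp_pos _).le

lemma sq_div_four_le_cosh (t : ℝ) : t ^ 2 / 4 ≤ cosh t := by
  have hexp := quadratic_le_exp_of_nonneg (abs_nonneg t)
  rw [← cosh_abs, cosh_eq, ← sq_abs t]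
  nlinarith [abs_nonneg t, exp_pos (-|t|)]

lemma expNegMulCosh_le_gaussian {v : ℝ} (hv : 0 ≤ v) (t : ℝ) :
    expNegMulCosh v t ≤ exp (-(v / 4) * t ^ 2) := by
  rw [expNegMulCosh, exp_le_exp]
  nlinarith [sq_div_four_le_cosh t]

lemma integrable_expNegMulCosh {v : ℝ} (hv : 0 < v) : Integrable (expNegMulCosh v) := by
  refine (integrable_exp_neg_mul_sq (by positivity : 0 < v / 4)).mono' ?_ ?_
  · exact (continuous_exp.comp (continuous_const.mul continuous_cosh)).aestronglyMeasurable
  · refine ae_of_all _ fun t => ?_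
    rw [norm_of_nonneg (expNegMulCosh_nonneg v t)]
    exact expNegMulCosh_le_gaussian hv.le t

lemma integral_expNegMulCosh (v : ℝ) : ∫ t, expNegMulCosh v t = 2 * K0 v := by
  calc ∫ t, expNegMulCosh v t = ∫ t, expNegMulCosh v |t| := by
        simp only [expNegMulCosh, cosh_abs]
    _ = 2 * K0 v := integral_comp_abs

lemma setIntegral_comp_add_right_le {f : ℝ → ℝ} (hf : Integrable f) (hf₀ : 0 ≤ f)
    (c : ℝ) (s : Set ℝ) : ∫ u in s, f (u + c) ≤ ∫ u, f u :=
  (setIntegral_le_integral (hf.comp_add_right c) (ae_of_all _ fun u => hf₀ (u + c))).trans_eq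
    (integral_add_right_eq_self f c)

lemma setIntegral_comp_sub_left_le {f : ℝ → ℝ} (hf : Integrable f) (hf₀ : 0 ≤ f)
    (c : ℝ) (s : Set ℝ) : ∫ u in s, f (c - u) ≤ ∫ u, f u :=
  (setIntegral_le_integral (hf.comp_sub_left c) (ae_of_all _ fun u => hf₀ (c - u))).trans_eq
    (integral_sub_left_eq_self f volume c)

lemma phiKer_eq (x u v : ℝ) :
    phiKer x u v = expNegMulCosh v (u + (x - 1)) + expNegMulCosh v ((x + 1) - u)
      - expNegMulCosh v (u + (x + 1)) - expNegMulCosh v ((x - 1) - u) := by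
  simp only [phiKer, expNegMulCosh]
  ring_nf

lemma abs_phiKer_le (x u v : ℝ) :
    |phiKer x u v| ≤ expNegMulCosh v (u + (x - 1)) + expNegMulCosh v ((x + 1) - u)
      + expNegMulCosh v (u + (x + 1)) + expNegMulCosh v ((x - 1) - u) := by
  rw [phiKer_eq, abs_le]
  have := expNegMulCosh_nonneg v
  constructor <;> linarith [this (u + (x - 1)), this ((x + 1) - u), this (u + (x + 1)),
    this ((x - 1) - u)]

lemma continuous_phiKer (x : ℝ) : Continuous fun w : ℝ × ℝ => phiKer x w.1 w.2 := by
  unfold phiKer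
  fun_prop

lemma integrable_phiKer {v : ℝ} (hv : 0 < v) (x : ℝ) : Integrable fun u => phiKer x u v := by
  have hE := integrable_expNegMulCosh hv
  simp only [phiKer_eq]
  exact (((hE.comp_add_right _).add (hE.comp_sub_left _)).sub (hE.comp_add_right _)).sub
    (hE.comp_sub_left _)

lemma setIntegral_abs_phiKer_le {v : ℝ} (hv : 0 < v) (x : ℝ) (s : Set ℝ) :
    ∫ u in s, |phiKer x u v| ≤ 8 * K0 v := by
  have hE := integrable_expNegMulCosh hv
  have hE₀ : 0 ≤ expNegMulCosh v := expNegMulCosh_nonneg v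
  have hA := (hE.comp_add_right (x - 1)).integrableOn (s := s)
  have hB := (hE.comp_sub_left (x + 1)).integrableOn (s := s)
  have hC := (hE.comp_add_right (x + 1)).integrableOn (s := s)
  have hD := (hE.comp_sub_left (x - 1)).integrableOn (s := s)
  calc ∫ u in s, |phiKer x u v|
      ≤ ∫ u in s, (expNegMulCosh v (u + (x - 1)) + expNegMulCosh v ((x + 1) - u)
          + expNegMulCosh v (u + (x + 1)) + expNegMulCosh v ((x - 1) - u)) :=
        integral_mono (integrable_phiKer hv x).integrableOn.abs (((hA.add hB).add hC).add hD)
          fun u => abs_phiKer_le x u v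
    _ = (∫ u in s, expNegMulCosh v (u + (x - 1))) + (∫ u in s, expNegMulCosh v ((x + 1) - u))
          + (∫ u in s, expNegMulCosh v (u + (x + 1)))
          + ∫ u in s, expNegMulCosh v ((x - 1) - u) := by
        rw [integral_add ?_ hD, integral_add ?_ hC, integral_add hA hB]
        exacts [hA.add hB, (hA.add hB).add hC]
    _ ≤ 4 * ∫ t, expNegMulCosh v t := by
        linarith [setIntegral_comp_add_right_le hE hE₀ (x - 1) s,
          setIntegral_comp_sub_left_le hE hE₀ (x + 1) s,
          setIntegral_comp_add_right_le hE hE₀ (x + 1) s,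
          setIntegral_comp_sub_left_le hE hE₀ (x - 1) s]
    _ = 8 * K0 v := by rw [integral_expNegMulCosh]; ring

section Weighted

variable {ρ : ℝ → ℝ}

lemma setIntegral_abs_phiKer_mul_le {v : ℝ} (hv : 0 < v) (x : ℝ) {r : ℝ} (hr : 0 ≤ r) :
    ∫ u in Ioi 0, |phiKer x u v| * r ≤ 8 * (K0 v * r) := by
  rw [integral_mul_const, ← mul_assoc]
  exact mul_le_mul_of_nonneg_right (setIntegral_abs_phiKer_le hv x _) hr

lemma integrableOn_setIntegral_abs_phiKer_mul (hm : Measurable ρ)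
    (hnn : ∀ v ∈ Ioi (0 : ℝ), 0 ≤ ρ v) (hint : IntegrableOn (fun v => K0 v * ρ v) (Ioi 0))
    (x : ℝ) : IntegrableOn (fun v => ∫ u in Ioi 0, |phiKer x u v| * ρ v) (Ioi 0) := by
  have hmeas : StronglyMeasurable fun w : ℝ × ℝ => |phiKer x w.1 w.2| * ρ w.2 :=
    ((continuous_phiKer x).measurable.abs.mul (hm.comp measurable_snd)).stronglyMeasurable
  refine (hint.const_mul 8).mono' hmeas.integral_prod_left'.aestronglyMeasurable ?_
  filter_upwards [ae_restrict_mem measurableSet_Ioi] with v hv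
  rw [norm_of_nonneg (integral_nonneg fun u => mul_nonneg (abs_nonneg _) (hnn v hv))]
  exact setIntegral_abs_phiKer_mul_le hv x (hnn v hv)

lemma integrableOn_phiKer_mul (hm : Measurable ρ)
    (hnn : ∀ v ∈ Ioi (0 : ℝ), 0 ≤ ρ v) (hint : IntegrableOn (fun v => K0 v * ρ v) (Ioi 0))
    (x : ℝ) : IntegrableOn (fun w : ℝ × ℝ => phiKer x w.1 w.2 * ρ w.2) (Ioi 0 ×ˢ Ioi 0) := by
  have hmeas : Measurable fun w : ℝ × ℝ => phiKer x w.1 w.2 * ρ w.2 :=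
    (continuous_phiKer x).measurable.mul (hm.comp measurable_snd)
  rw [IntegrableOn, Measure.volume_eq_prod, ← Measure.prod_restrict,
    integrable_prod_iff' hmeas.aestronglyMeasurable]
  constructor
  · filter_upwards [ae_restrict_mem measurableSet_Ioi] with v hv
    exact (integrable_phiKer hv x).integrableOn.mul_const (ρ v)
  · refine (integrableOn_setIntegral_abs_phiKer_mul hm hnn hint x).congr ?_
    filter_upwards [ae_restrict_mem measurableSet_Ioi] with v hv
    simp only [norm_mul, norm_eq_abs, abs_of_nonneg (hnn v hv)]

end Weighted

theorem gconv_one_bound_general (ρ₂ : ℝ → ℝ) (hm : Measurable ρ₂)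
    (hnn : ∀ v ∈ Set.Ioi (0 : ℝ), 0 ≤ ρ₂ v)
    (hint : MeasureTheory.IntegrableOn (fun v => K0 v * ρ₂ v) (Set.Ioi 0))
    (x : ℝ) :
    MeasureTheory.IntegrableOn (fun w : ℝ × ℝ => phiKer x w.1 w.2 * (1 : ℝ) * ρ₂ w.2)
      (Set.Ioi 0 ×ˢ Set.Ioi 0) ∧
    |gconv (fun _ => (1 : ℝ)) ρ₂ x| ≤
      (1 / 4) * (∫ v in Set.Ioi (0 : ℝ), ∫ u in Set.Ioi (0 : ℝ), |phiKer x u v| * ρ₂ v) ∧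
    (1 / 4) * (∫ v in Set.Ioi (0 : ℝ), ∫ u in Set.Ioi (0 : ℝ), |phiKer x u v| * ρ₂ v) ≤
      2 * ∫ v in Set.Ioi (0 : ℝ), K0 v * ρ₂ v := by
  have hI := integrableOn_setIntegral_abs_phiKer_mul hm hnn hint x
  simp only [gconv, mul_one]
  refine ⟨integrableOn_phiKer_mul hm hnn hint x, ?_, ?_⟩
  · rw [abs_mul, abs_of_pos (by norm_num : (0 : ℝ) < 1 / 4)]
    gcongr
    rw [← norm_eq_abs]
    refine norm_integral_le_of_norm_le hI ?_
    filter_upwards [ae_restrict_mem measurableSet_Ioi] with v hv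
    refine (norm_integral_le_integral_norm (fun u => phiKer x u v * ρ₂ v)).trans_eq ?_
    simp only [norm_mul, norm_eq_abs, abs_of_nonneg (hnn v hv)]
  · have hbound : ∫ v in Ioi 0, ∫ u in Ioi 0, |phiKer x u v| * ρ₂ v ≤
        ∫ v in Ioi 0, 8 * (K0 v * ρ₂ v) :=
      setIntegral_mono_on hI (hint.const_mul 8) measurableSet_Ioi
        fun v hv => setIntegral_abs_phiKer_mul_le hv x (hnn v hv)
    rw [integral_const_mul] at hbound
    linarith

theorem gconv_one_bound (ρ₂ : ℝ → ℝ) (hm : Measurable ρ₂)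
    (hnn : ∀ v ∈ Set.Ioi (0 : ℝ), 0 ≤ ρ₂ v)
    (hint : MeasureTheory.IntegrableOn (fun v => K0 v * ρ₂ v) (Set.Ioi 0))
    (x : ℝ) (hx : 0 < x) :
    MeasureTheory.IntegrableOn (fun w : ℝ × ℝ => phiKer x w.1 w.2 * (1 : ℝ) * ρ₂ w.2)
      (Set.Ioi 0 ×ˢ Set.Ioi 0) ∧
    |gconv (fun _ => (1 : ℝ)) ρ₂ x| ≤
      (1 / 4) * (∫ v in Set.Ioi (0 : ℝ), ∫ u in Set.Ioi (0 : ℝ), |phiKer x u v| * ρ₂ v) ∧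
    (1 / 4) * (∫ v in Set.Ioi (0 : ℝ), ∫ u in Set.Ioi (0 : ℝ), |phiKer x u v| * ρ₂ v) ≤
      2 * ∫ v in Set.Ioi (0 : ℝ), K0 v * ρ₂ v :=
  gconv_one_bound_general ρ₂ hm hnn hint x
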